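/- arXiv:1907.11090 — 8 statements merged into one kernel-verified Lean document; each statement's English description precedes it below -/
import Mathlib

section
/- (Front-door adjustment formula) In the four-node info-causal DAG with edges D → A, D → B, A → C, C → B, the info-intervention distribution of X_B satisfies P(x_B | σ(x̃_A)) = Σ_{x_C} P(x_C | x̃_A) Σ_{x_A} P(x_B | x_C, x_A) P(x_A), where all probabilities on the right involve only the observed variables A, B, C. -/
open Finset

/-!
Summing the observational joint over the latent `D` gives
`P(a, b, c) = P(c | a) · Σ_d P(d) P(a | d) P(b | c, d)` and `P(a) = Σ_d P(d) P(a | d)`.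
After `P(c | a)` cancels, `P(b | c, a) P(a) = Σ_d P(d) P(a | d) P(b | c, d)`, so both sides equal
`Σ_c P(c | x̃_A) Σ_a Σ_d P(d) P(a | d) P(b | c, d)`.
-/

/-- Joint distribution of the front-door DAG `D → A`, `D → B`, `A → C`, `C → B`. -/
noncomputable def frontJoint {α β γ δ : Type*} (pD : δ → ℝ) (pA : δ → α → ℝ)
    (pC : α → γ → ℝ) (pB : γ → δ → β → ℝ) (a : α) (b : β) (c : γ) (d : δ) : ℝ :=
  pD d * pA d a * pC a c * pB c d b

section FrontDoor

variable {α β γ δ : Type*} {pD : δ → ℝ} {pA : δ → α → ℝ} {pC : α → γ → ℝ} {pB : γ → δ → β → ℝ}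

theorem sum_frontJoint_latent [Fintype δ] (a : α) (b : β) (c : γ) :
    ∑ d, frontJoint pD pA pC pB a b c d = pC a c * ∑ d, pD d * pA d a * pB c d b := by
  rw [mul_sum]
  exact sum_congr rfl fun d _ => by simp only [frontJoint]; ring

theorem sum_frontJoint_outcome_latent [Fintype β] [Fintype δ]
    (hpB1 : ∀ c d, ∑ b, pB c d b = 1) (a : α) (c : γ) :
    ∑ b, ∑ d, frontJoint pD pA pC pB a b c d = pC a c * ∑ d, pD d * pA d a := by
  rw [sum_comm, mul_sum]
  refine sum_congr rfl fun d _ => ?_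
  simp only [frontJoint, ← mul_sum, hpB1, mul_one]
  ring

theorem sum_frontJoint_marginal [Fintype β] [Fintype γ] [Fintype δ]
    (hpB1 : ∀ c d, ∑ b, pB c d b = 1)
    (hpC1 : ∀ a, ∑ c, pC a c = 1) (a : α) :
    ∑ b, ∑ c, ∑ d, frontJoint pD pA pC pB a b c d = ∑ d, pD d * pA d a := by
  rw [sum_comm]
  simp only [sum_frontJoint_outcome_latent hpB1, ← sum_mul, hpC1, one_mul]

end FrontDoor

theorem mul_div_mul_mul_cancel {K : Type*} [Field K] {x m : K} (h : x * m ≠ 0) (s : K) :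
    x * s / (x * m) * m = s := by
  rw [mul_div_mul_left _ _ (left_ne_zero_of_mul h), div_mul_cancel₀ _ (right_ne_zero_of_mul h)]

theorem front_door_general {α β γ δ : Type*} [Fintype α] [Fintype β] [Fintype γ] [Fintype δ]
    (pD : δ → ℝ) (pA : δ → α → ℝ) (pC : α → γ → ℝ) (pB : γ → δ → β → ℝ)
    (hpC1 : ∀ a, ∑ c, pC a c = 1) (hpB1 : ∀ c d, ∑ b, pB c d b = 1)
    (xa : α) (xb : β)
    (hposAC : ∀ a c, 0 < ∑ b, ∑ d, frontJoint pD pA pC pB a b c d) :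
    -- P(x_B | σ(x̃_A))
    (∑ a, ∑ c, ∑ d, pD d * pA d a * pC xa c * pB c d xb)
      = ∑ c, ((∑ b, ∑ d, frontJoint pD pA pC pB xa b c d)
              / (∑ b, ∑ c, ∑ d, frontJoint pD pA pC pB xa b c d))   -- P(x_C | x̃_A)
          * ∑ a, ((∑ d, frontJoint pD pA pC pB a xb c d)
                  / (∑ b, ∑ d, frontJoint pD pA pC pB a b c d))     -- P(x_B | x_C, x_A)
              * (∑ b, ∑ c, ∑ d, frontJoint pD pA pC pB a b c d)     -- P(x_A)
      := by
  have hne : ∀ a c, pC a c * ∑ d, pD d * pA d a ≠ 0 := fun a c =>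
    sum_frontJoint_outcome_latent hpB1 a c ▸ (hposAC a c).ne'
  -- Outermost sums first, before `sum_frontJoint_latent` rewrites the inner `∑ d`.
  simp only [sum_frontJoint_marginal hpB1 hpC1]
  simp only [sum_frontJoint_outcome_latent hpB1]
  simp only [sum_frontJoint_latent, mul_div_mul_mul_cancel (hne _ _)]
  rw [sum_comm]
  refine sum_congr rfl fun c _ => ?_
  rw [mul_div_cancel_right₀ _ (right_ne_zero_of_mul (hne xa c)), mul_sum]
  refine sum_congr rfl fun a _ => ?_
  rw [mul_sum]
  exact sum_congr rfl fun d _ => by ring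

/-- Front-door adjustment formula. In the front-door DAG,
`P(x_B | σ(x̃_A)) = Σ_{x_C} P(x_C | x̃_A) Σ_{x_A} P(x_B | x_C, x_A) P(x_A)`, where the
right-hand side involves only the observed variables `A, B, C` (conditionals and marginals
are ratios/sums of the observational joint). -/
theorem front_door {α β γ δ : Type*} [Fintype α] [Fintype β] [Fintype γ] [Fintype δ]
    (pD : δ → ℝ) (pA : δ → α → ℝ) (pC : α → γ → ℝ) (pB : γ → δ → β → ℝ)
    (hpD0 : ∀ d, 0 ≤ pD d) (hpA0 : ∀ d a, 0 ≤ pA d a)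
    (hpC0 : ∀ a c, 0 ≤ pC a c) (hpB0 : ∀ c d b, 0 ≤ pB c d b)
    (hpD1 : ∑ d, pD d = 1) (hpA1 : ∀ d, ∑ a, pA d a = 1)
    (hpC1 : ∀ a, ∑ c, pC a c = 1) (hpB1 : ∀ c d, ∑ b, pB c d b = 1)
    (xa : α) (xb : β)
    (hposA : ∀ a, 0 < ∑ b, ∑ c, ∑ d, frontJoint pD pA pC pB a b c d)
    (hposAC : ∀ a c, 0 < ∑ b, ∑ d, frontJoint pD pA pC pB a b c d) :
    -- P(x_B | σ(x̃_A))
    (∑ a, ∑ c, ∑ d, pD d * pA d a * pC xa c * pB c d xb)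
      = ∑ c, ((∑ b, ∑ d, frontJoint pD pA pC pB xa b c d)
              / (∑ b, ∑ c, ∑ d, frontJoint pD pA pC pB xa b c d))   -- P(x_C | x̃_A)
          * ∑ a, ((∑ d, frontJoint pD pA pC pB a xb c d)
                  / (∑ b, ∑ d, frontJoint pD pA pC pB a b c d))     -- P(x_B | x_C, x_A)
              * (∑ b, ∑ c, ∑ d, frontJoint pD pA pC pB a b c d)     -- P(x_A)
    :=
  front_door_general pD pA pC pB hpC1 hpB1 xa xb hposAC
end

section
/- (Commutativity of info interventions) For an SCM over an acyclic graph and two disjoint intervention sets A, B ⊆ V, applying info interventions in either order yields the same counterfactual variables: (X_v^{σ(x̃_A)})^{σ(x̃_B)} = (X_v^{σ(x̃_B)})^{σ(x̃_A)} for every node v. -/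
/-!
Both compositions intervene on every node of `A ∪ B`, and since `A` and `B` are disjoint
they feed the structural equations the same parent values; so `Y` and `Z` solve one and the
same acyclic system, whose solution is unique by well-founded induction on the parent relation.
-/

theorem WellFounded.fixedPoint_unique {V Ω : Type*} {r : V → V → Prop} (hwf : WellFounded r)
    (F : V → (V → Ω) → Ω) (hloc : ∀ v (x y : V → Ω), (∀ j, r j v → x j = y j) → F v x = F v y)
    {X Y : V → Ω} (hX : ∀ v, X v = F v X) (hY : ∀ v, Y v = F v Y) : X = Y := by
  funext v
  induction v using hwf.induction with
  | _ v ih => rw [hX v, hY v]; exact hloc v X Y ih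

/-- Commutativity of info interventions. For an SCM over an acyclic graph
(parent relation well-founded) with structural equations `X_v = f_v(X_{pa(v)})`
(`f v` depending only on the parent coordinates), and two disjoint intervention sets
`A, B`, applying the info interventions `σ(x̃_A)` and `σ(x̃_B)` in either order yields the
same counterfactual variables: `(X_v^{σ(x̃_A)})^{σ(x̃_B)} = (X_v^{σ(x̃_B)})^{σ(x̃_A)}` for
every node `v`. Here `Y` solves the structural equations of the composition
`σ(x̃_B) ∘ σ(x̃_A)` and `Z` those of `σ(x̃_A) ∘ σ(x̃_B)`. -/
theorem info_intervention_commute {V Ω : Type*} [DecidableEq V]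
    (pa : V → Finset V) (f : V → (V → Ω) → Ω)
    (hloc : ∀ v (x y : V → Ω), (∀ j ∈ pa v, x j = y j) → f v x = f v y)
    (hwf : WellFounded (fun u v : V => u ∈ pa v))
    (A B : Finset V) (hAB : Disjoint A B) (xA xB : V → Ω) (Y Z : V → Ω)
    (hY : ∀ v, Y v = f v (fun j => if j ∈ B then xB j else if j ∈ A then xA j else Y j))
    (hZ : ∀ v, Z v = f v (fun j => if j ∈ A then xA j else if j ∈ B then xB j else Z j)) :
    ∀ v, Y v = Z v := by
  let F : V → (V → Ω) → Ω := fun v X =>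
    f v (fun j => if j ∈ A then xA j else if j ∈ B then xB j else X j)
  have hF_loc : ∀ v (x y : V → Ω), (∀ j, j ∈ pa v → x j = y j) → F v x = F v y :=
    fun v x y hxy => hloc v _ _ fun j hj => by simp only [hxy j hj]
  have hY_solves : ∀ v, Y v = F v Y := fun v => by
    rw [hY v]
    congr 1
    funext j
    exact ite_ite_comm _ _ _ _ fun hB hA => Finset.disjoint_left.mp hAB hA hB
  exact congrFun (hwf.fixedPoint_unique F hF_loc hY_solves hZ)
end

section
/- (Equality of do- and info-intervention conditional probabilities) For an info-causal DAG and arbitrary disjoint node sets A, B, C, the do-intervention and info-intervention conditionals agree: P(x_B | do(x̃_A), x_C) = P(x_B | σ(x̃_A), x_C). -/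
open Finset

/-- The info-intervention distribution `P(x | σ(x̃_A)) = ∏_{k∈V} P(x_k | x*_{pa(k)})`,
where the kernel `q v a x` stands for `P(x_v = a | x_{pa(v)})` (depending only on the
parent coordinates of `x`), and `x*_j = x̃_j` if `j ∈ A`, else `x_j`. -/
noncomputable def infoDist {V Ω : Type*} [Fintype V] [DecidableEq V]
    (q : V → Ω → (V → Ω) → ℝ) (A : Finset V) (xt : V → Ω) (x : V → Ω) : ℝ :=
  ∏ v : V, q v (x v) (fun j => if j ∈ A then xt j else x j)

/-- Marginal of a (discrete) distribution `p` on the coordinates in `S`, evaluated at `y`. -/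
noncomputable def Marg {V Ω : Type*} [Fintype V] [DecidableEq V] [Fintype Ω] [DecidableEq Ω]
    (p : (V → Ω) → ℝ) (S : Finset V) (y : V → Ω) : ℝ :=
  ∑ x : V → Ω, if ∀ i ∈ S, x i = y i then p x else 0

/-- The do-intervention distribution
`P(x | do(x̃_A)) = ∏_{k∉A} P(x_k | x_{pa(k)}) · ∏_{j∈A} 1[x_j = x̃_j]`. -/
noncomputable def doDist {V Ω : Type*} [Fintype V] [DecidableEq V] [DecidableEq Ω]
    (q : V → Ω → (V → Ω) → ℝ) (A : Finset V) (xt : V → Ω) (x : V → Ω) : ℝ :=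
  ∏ v : V, if v ∈ A then (if x v = xt v then (1 : ℝ) else 0) else q v (x v) x

/-!
Both intervention distributions factor as `(∏_{v ∈ A} r_v(x_v | x*)) · T(x*)`, where `x*` is `x`
with its `A`-coordinates reset to `x̃_A`, `T(x*) = ∏_{v ∉ A} q_v(x*_v | x*)` is the truncated
factorization, and `r_v` is a normalized kernel: the point mass at `x̃_v` for `do`, and `q_v` itself
for `σ`. Since `x*` does not depend on `x_A`, summing out the `A`-coordinates removes the first
factor. Hence the two distributions have the same marginal on every set of nodes disjoint from `A`,
in particular on `C` and on `B ∪ C`, and so the conditionals agree.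
-/

section

variable {V Ω : Type*} [Fintype V] [DecidableEq V]

noncomputable def truncatedProd (q : V → Ω → (V → Ω) → ℝ) (A : Finset V) (x : V → Ω) : ℝ :=
  ∏ v ∈ Aᶜ, q v (x v) x

theorem infoDist_eq_prod_mul_truncatedProd (q : V → Ω → (V → Ω) → ℝ) (A : Finset V)
    (xt x : V → Ω) :
    infoDist q A xt x
      = (∏ v ∈ A, q v (x v) (A.piecewise xt x)) * truncatedProd q A (A.piecewise xt x) := by
  rw [infoDist, truncatedProd, ← prod_mul_prod_compl A]
  congr 1
  refine prod_congr rfl fun v hv => ?_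
  rw [A.piecewise_eq_of_notMem _ _ (mem_compl.mp hv)]
  rfl

theorem doDist_eq_prod_mul_truncatedProd [DecidableEq Ω] (q : V → Ω → (V → Ω) → ℝ)
    (A : Finset V) (xt x : V → Ω) :
    doDist q A xt x
      = (∏ v ∈ A, if x v = xt v then 1 else 0) * truncatedProd q A (A.piecewise xt x) := by
  by_cases hx : ∀ v ∈ A, x v = xt v
  · have hpw : A.piecewise xt x = x := by
      funext v
      by_cases hv : v ∈ A
      · rw [A.piecewise_eq_of_mem _ _ hv, hx v hv]
      · exact A.piecewise_eq_of_notMem _ _ hv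
    rw [hpw, doDist, truncatedProd, ← prod_mul_prod_compl A]
    congr 1
    · exact prod_congr rfl fun v hv => if_pos hv
    · exact prod_congr rfl fun v hv => if_neg (mem_compl.mp hv)
  · obtain ⟨v, hvA, hv⟩ : ∃ v ∈ A, x v ≠ xt v := by simpa using hx
    rw [doDist, prod_eq_zero (mem_univ v) (by simp [hvA, hv]),
      prod_eq_zero hvA (if_neg hv), zero_mul]

variable [Fintype Ω]

theorem sum_prod_kernel_mul_piecewise (A : Finset V) (xt : V → Ω)
    (r : V → Ω → (V → Ω) → ℝ) (hr : ∀ v ∈ A, ∀ z, ∑ a, r v a z = 1) (F : (V → Ω) → ℝ) :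
    ∑ x, (∏ v ∈ A, r v (x v) (A.piecewise xt x)) * F (A.piecewise xt x)
      = ∑ g : {v // v ∉ A} → Ω, F (fun v => if h : v ∈ A then xt v else g ⟨v, h⟩) := by
  let e := Equiv.piEquivPiSubtypeProd (· ∈ A) (fun _ : V => Ω)
  rw [← e.symm.sum_comp, Fintype.sum_prod_type, Finset.sum_comm]
  refine Fintype.sum_congr _ _ fun g => ?_
  set z : V → Ω := fun v => if h : v ∈ A then xt v else g ⟨v, h⟩
  have hpw : ∀ f, A.piecewise xt (e.symm (f, g)) = z := by
    intro f; funext v; by_cases h : v ∈ A <;> simp [e, z, h]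
  have hsum : ∑ f : {v // v ∈ A} → Ω, ∏ v ∈ A, r v (e.symm (f, g) v) z = 1 := calc
    _ = ∑ f : {v // v ∈ A} → Ω, ∏ v : {v // v ∈ A}, r v (f v) z := by
      refine Fintype.sum_congr _ _ fun f => ?_
      rw [← Finset.prod_coe_sort A]
      exact Fintype.prod_congr _ _ fun v => by simp [e, v.2]
    _ = ∏ v : {v // v ∈ A}, ∑ a, r v a z :=
      (Fintype.prod_sum fun (v : {v // v ∈ A}) a => r v a z).symm
    _ = 1 := Finset.prod_eq_one fun v _ => hr v v.2 z
  simp only [hpw, ← Finset.sum_mul, hsum, one_mul]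

variable [DecidableEq Ω]

theorem marg_eq_sum_of_eq_prod_mul (A : Finset V) (xt : V → Ω) (p : (V → Ω) → ℝ)
    (r : V → Ω → (V → Ω) → ℝ) (hr : ∀ v ∈ A, ∀ z, ∑ a, r v a z = 1) (G : (V → Ω) → ℝ)
    (hp : ∀ x, p x = (∏ v ∈ A, r v (x v) (A.piecewise xt x)) * G (A.piecewise xt x))
    (S : Finset V) (hAS : Disjoint A S) (y : V → Ω) :
    Marg p S y = ∑ g : {v // v ∉ A} → Ω,
      if ∀ i ∈ S, (if h : i ∈ A then xt i else g ⟨i, h⟩) = y i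
      then G (fun v => if h : v ∈ A then xt v else g ⟨v, h⟩) else 0 := by
  have hcond : ∀ x : V → Ω, (∀ i ∈ S, A.piecewise xt x i = y i) ↔ ∀ i ∈ S, x i = y i :=
    fun x => forall₂_congr fun i hi => by
      rw [A.piecewise_eq_of_notMem _ _ (disjoint_right.mp hAS hi)]
  rw [← sum_prod_kernel_mul_piecewise A xt r hr
    (fun z => if ∀ i ∈ S, z i = y i then G z else 0)]
  refine Fintype.sum_congr _ _ fun x => ?_
  simp only [hcond, hp, mul_ite, mul_zero]

theorem marg_doDist_eq_marg_infoDist (q : V → Ω → (V → Ω) → ℝ)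
    (hnorm : ∀ v x, ∑ a, q v a x = 1) (A S : Finset V) (hAS : Disjoint A S) (xt y : V → Ω) :
    Marg (doDist q A xt) S y = Marg (infoDist q A xt) S y := by
  rw [marg_eq_sum_of_eq_prod_mul A xt _ (fun v a _ => if a = xt v then 1 else 0)
      (fun v _ _ => by simp) _
      (doDist_eq_prod_mul_truncatedProd q A xt) S hAS y,
    marg_eq_sum_of_eq_prod_mul A xt _ q (fun v _ => hnorm v) _
      (infoDist_eq_prod_mul_truncatedProd q A xt) S hAS y]

end

theorem do_eq_info_conditional_general {V Ω : Type*} [Fintype V] [DecidableEq V]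
    [Fintype Ω] [DecidableEq Ω]
    (q : V → Ω → (V → Ω) → ℝ)
    (hnorm : ∀ v x, ∑ a : Ω, q v a x = 1)
    (A B C : Finset V) (hAB : Disjoint A B) (hAC : Disjoint A C)
    (xt y : V → Ω) :
    Marg (doDist q A xt) (B ∪ C) y / Marg (doDist q A xt) C y
      = Marg (infoDist q A xt) (B ∪ C) y / Marg (infoDist q A xt) C y := by
  rw [marg_doDist_eq_marg_infoDist q hnorm A (B ∪ C) (disjoint_union_right.mpr ⟨hAB, hAC⟩),
    marg_doDist_eq_marg_infoDist q hnorm A C hAC]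

/-- Equality of do- and info-intervention conditional probabilities:
`P(x_B | do(x̃_A), x_C) = P(x_B | σ(x̃_A), x_C)` for arbitrary pairwise disjoint node sets
`A, B, C`, where the conditionals are ratios of marginals of the respective intervention
distributions. -/
theorem do_eq_info_conditional {V Ω : Type*} [Fintype V] [DecidableEq V]
    [Fintype Ω] [DecidableEq Ω]
    (pa : V → Finset V) (q : V → Ω → (V → Ω) → ℝ) (P : (V → Ω) → ℝ)
    (hloc : ∀ v a (x y : V → Ω), (∀ j ∈ pa v, x j = y j) → q v a x = q v a y)
    (hq0 : ∀ v a x, 0 ≤ q v a x) (hnorm : ∀ v x, ∑ a : Ω, q v a x = 1)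
    (hfact : ∀ x, P x = ∏ v : V, q v (x v) x)
    (A B C : Finset V) (hAB : Disjoint A B) (hAC : Disjoint A C) (hBC : Disjoint B C)
    (xt y : V → Ω)
    (hpos1 : Marg (doDist q A xt) C y ≠ 0)
    (hpos2 : Marg (infoDist q A xt) C y ≠ 0) :
    Marg (doDist q A xt) (B ∪ C) y / Marg (doDist q A xt) C y
      = Marg (infoDist q A xt) (B ∪ C) y / Marg (infoDist q A xt) C y :=
  do_eq_info_conditional_general q hnorm A B C hAB hAC xt y
end

section
/- (Rule 2, simple version: action/observation exchange) In an info-causal DAG, if B is d-separated from A given C in the info-intervention graph G^{σ(x̃_A)}, then P(x_B | σ(x̃_A), x_C) = P(x_B | x̃_A, x_C), i.e., the intervention conditional equals the ordinary observational conditional. -/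
open Finset

/-- `b` is a collider on a path segment `a — b — c` for edge relation `E`:
both edges point into `b`. -/
def IsCollider {V : Type*} (E : V → V → Prop) (a b c : V) : Prop := E a b ∧ E c b

/-- The walk `f` (a sequence of vertices, consecutive ones adjacent in either direction)
is blocked at internal position `i` by the conditioning set `Z`: either `f i` is a
non-collider lying in `Z`, or `f i` is a collider such that neither it nor any of its
descendants lies in `Z`. -/
def BlockedAt {V : Type*} (E : V → V → Prop) (Z : Set V) (f : ℕ → V) (i : ℕ) : Prop :=
  (¬ IsCollider E (f (i - 1)) (f i) (f (i + 1)) ∧ f i ∈ Z) ∨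
  (IsCollider E (f (i - 1)) (f i) (f (i + 1)) ∧ f i ∉ Z ∧
    ∀ z ∈ Z, ¬ Relation.TransGen E (f i) z)

/-- d-separation: every walk from `B` to `C` (consecutive vertices adjacent in `E` in
either direction) is blocked by `Z` at some internal position. -/
def dSep {V : Type*} (E : V → V → Prop) (B C Z : Set V) : Prop :=
  ∀ (n : ℕ) (f : ℕ → V), f 0 ∈ B → f n ∈ C →
    (∀ i < n, E (f i) (f (i + 1)) ∨ E (f (i + 1)) (f i)) →
    ∃ i, 0 < i ∧ i < n ∧ BlockedAt E Z f i

/-- Conditional independence of the coordinate sets `S` and `T` given `W` under the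
(discrete) distribution `p`: `P(x_S, x_T, x_W) P(x_W) = P(x_S, x_W) P(x_T, x_W)`. -/
noncomputable def CondIndep {V Ω : Type*} [Fintype V] [DecidableEq V] [Fintype Ω]
    [DecidableEq Ω] (p : (V → Ω) → ℝ) (S T W : Finset V) : Prop :=
  ∀ y : V → Ω, Marg p (S ∪ T ∪ W) y * Marg p W y = Marg p (S ∪ W) y * Marg p (T ∪ W) y

/-!
By the global Markov property of the intervened graph, `B ⫫ A | C` under `P(· | σ(x̃_A))`, so
`P(x_B | σ(x̃_A), x_C) = P(x_B | σ(x̃_A), x̃_A, x_C)`. On the event `x_A = x̃_A` the substitution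
`x* = x` is trivial, so there the intervened product `∏ P(x_k | x*_pa(k))` is the observational
joint, and the right-hand ratio is `P(x_B | x̃_A, x_C)`.
-/

theorem marg_congr {V Ω : Type*} [Fintype V] [DecidableEq V] [Fintype Ω] [DecidableEq Ω]
    (p : (V → Ω) → ℝ) (S : Finset V) {y y' : V → Ω} (h : ∀ i ∈ S, y i = y' i) :
    Marg p S y = Marg p S y' :=
  Finset.sum_congr rfl fun _ _ => if_congr (forall₂_congr fun i hi => by rw [h i hi]) rfl rfl

theorem marg_congr_dist {V Ω : Type*} [Fintype V] [DecidableEq V] [Fintype Ω] [DecidableEq Ω]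
    {p p' : (V → Ω) → ℝ} (S : Finset V) (z : V → Ω)
    (h : ∀ x : V → Ω, (∀ i ∈ S, x i = z i) → p x = p' x) :
    Marg p S z = Marg p' S z := by
  refine Finset.sum_congr rfl fun x _ => ?_
  split_ifs with hx
  · exact h x hx
  · rfl

theorem infoDist_eq_prod {V Ω : Type*} [Fintype V] [DecidableEq V]
    (q : V → Ω → (V → Ω) → ℝ) {A : Finset V} {xt x : V → Ω} (hx : ∀ j ∈ A, x j = xt j) :
    infoDist q A xt x = ∏ v : V, q v (x v) x := by
  have hx' : (fun j => if j ∈ A then xt j else x j) = x := by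
    funext j
    split_ifs with hj
    · exact (hx j hj).symm
    · rfl
  rw [infoDist, hx']

theorem marg_infoDist_of_subset {V Ω : Type*} [Fintype V] [DecidableEq V] [Fintype Ω]
    [DecidableEq Ω] (q : V → Ω → (V → Ω) → ℝ) {A S : Finset V} (hAS : A ⊆ S) {xt z : V → Ω}
    (hz : ∀ j ∈ A, z j = xt j) :
    Marg (infoDist q A xt) S z = Marg (fun x => ∏ v : V, q v (x v) x) S z :=
  marg_congr_dist S z fun _ hx =>
    infoDist_eq_prod q fun j hj => (hx j (hAS hj)).trans (hz j hj)

theorem CondIndep.marg_div_eq {V Ω : Type*} [Fintype V] [DecidableEq V] [Fintype Ω]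
    [DecidableEq Ω] {p : (V → Ω) → ℝ} {S T W : Finset V} (h : CondIndep p S T W) {y : V → Ω}
    (hW : Marg p W y ≠ 0) (hTW : Marg p (T ∪ W) y ≠ 0) :
    Marg p (S ∪ W) y / Marg p W y = Marg p (S ∪ T ∪ W) y / Marg p (T ∪ W) y := by
  rw [div_eq_div_iff hW hTW, h y, mul_comm]

theorem info_rule2_simple_general {V Ω : Type*} [Fintype V] [DecidableEq V]
    [Fintype Ω] [DecidableEq Ω]
    (pa : V → Finset V) (q : V → Ω → (V → Ω) → ℝ) (P : (V → Ω) → ℝ)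
    (hfact : ∀ x, P x = ∏ v : V, q v (x v) x)
    (A B C : Finset V) (hAB : Disjoint A B) (hAC : Disjoint A C)
    (xt : V → Ω)
    (hMarkov : ∀ S T W : Finset V,
      dSep (fun u v => u ∈ pa v ∧ u ∉ A) (S : Set V) (T : Set V) (W : Set V) →
        CondIndep (infoDist q A xt) S T W)
    (hd : dSep (fun u v => u ∈ pa v ∧ u ∉ A) (B : Set V) (A : Set V) (C : Set V))
    (y : V → Ω)
    (hpos1 : Marg (infoDist q A xt) C y ≠ 0)
    (hpos2 : Marg (infoDist q A xt) (A ∪ C) (fun j => if j ∈ A then xt j else y j) ≠ 0) :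
    Marg (infoDist q A xt) (B ∪ C) y / Marg (infoDist q A xt) C y
      = Marg P (B ∪ C ∪ A) (fun j => if j ∈ A then xt j else y j)
          / Marg P (C ∪ A) (fun j => if j ∈ A then xt j else y j) := by
  set Q := infoDist q A xt
  set z : V → Ω := fun j => if j ∈ A then xt j else y j
  have hzA : ∀ j ∈ A, z j = xt j := fun j hj => if_pos hj
  have hQ_zy : ∀ S : Finset V, Disjoint A S → Marg Q S z = Marg Q S y := fun S hS =>
    marg_congr Q S fun j hj => if_neg (Finset.disjoint_right.mp hS hj)
  have hP : P = fun x => ∏ v : V, q v (x v) x := funext hfact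
  have hcond := (hMarkov B A C hd).marg_div_eq (hQ_zy C hAC ▸ hpos1) hpos2
  rw [← hQ_zy _ (Finset.disjoint_union_right.mpr ⟨hAB, hAC⟩), ← hQ_zy C hAC, hcond,
    union_right_comm, union_comm A C,
    marg_infoDist_of_subset q subset_union_right hzA,
    marg_infoDist_of_subset q subset_union_right hzA, hP]

/-- Rule 2, simple version: action/observation exchange. If `B` is
d-separated from `A` given `C` in the info-intervention graph `G^{σ(x̃_A)}` (edges out of
`A` removed), then `P(x_B | σ(x̃_A), x_C) = P(x_B | x̃_A, x_C)`: the intervention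
conditional equals the ordinary observational conditional (at the point `z` agreeing with
`x̃` on `A` and with `y` elsewhere). The global Markov property for the intervention
distribution is assumed, as allowed. -/
theorem info_rule2_simple {V Ω : Type*} [Fintype V] [DecidableEq V]
    [Fintype Ω] [DecidableEq Ω]
    (pa : V → Finset V) (q : V → Ω → (V → Ω) → ℝ) (P : (V → Ω) → ℝ)
    (hloc : ∀ v a (x y : V → Ω), (∀ j ∈ pa v, x j = y j) → q v a x = q v a y)
    (hq0 : ∀ v a x, 0 ≤ q v a x) (hnorm : ∀ v x, ∑ a : Ω, q v a x = 1)
    (hfact : ∀ x, P x = ∏ v : V, q v (x v) x)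
    (hacyc : ∀ v, ¬ Relation.TransGen (fun u w : V => u ∈ pa w) v v)
    (A B C : Finset V) (hAB : Disjoint A B) (hAC : Disjoint A C) (hBC : Disjoint B C)
    (xt : V → Ω)
    (hMarkov : ∀ S T W : Finset V,
      dSep (fun u v => u ∈ pa v ∧ u ∉ A) (S : Set V) (T : Set V) (W : Set V) →
        CondIndep (infoDist q A xt) S T W)
    (hd : dSep (fun u v => u ∈ pa v ∧ u ∉ A) (B : Set V) (A : Set V) (C : Set V))
    (y : V → Ω)
    (hpos1 : Marg (infoDist q A xt) C y ≠ 0)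
    (hpos2 : Marg (infoDist q A xt) (A ∪ C) (fun j => if j ∈ A then xt j else y j) ≠ 0)
    (hpos3 : Marg P (C ∪ A) (fun j => if j ∈ A then xt j else y j) ≠ 0) :
    Marg (infoDist q A xt) (B ∪ C) y / Marg (infoDist q A xt) C y
      = Marg P (B ∪ C ∪ A) (fun j => if j ∈ A then xt j else y j)
          / Marg P (C ∪ A) (fun j => if j ∈ A then xt j else y j) :=
  info_rule2_simple_general pa q P hfact A B C hAB hAC xt hMarkov hd y hpos1 hpos2
end

section
/- (Equivalence of checking conditions, part (i)) For a DAG G and pairwise disjoint node sets A, B, C, D: B is d-separated from C given D in the info-intervention graph G^{σ(x̃_A)} (obtained from G by removing all edges out of A) if and only if B is d-separated from C given A ∪ D in the graph G_{Ā} obtained from G by removing all edges into A. -/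
/-- Descendants in `G^{σ}` lying outside `A` are descendants in `G_Ā`. -/
private lemma trans_out_to_in {V : Type*} {E : V → V → Prop} {A : Set V} {v z : V}
    (h : Relation.TransGen (fun u w => E u w ∧ u ∉ A) v z) :
    z ∉ A → Relation.TransGen (fun u w => E u w ∧ w ∉ A) v z := by
  induction h with
  | single h => exact fun hz => Relation.TransGen.single ⟨h.1, hz⟩
  | tail _ hbz ih => exact fun hz => (ih hbz.2).tail ⟨hbz.1, hz⟩

/-- Descendants in `G_Ā` of a node outside `A` are descendants in `G^{σ}`. -/
private lemma trans_in_to_out {V : Type*} {E : V → V → Prop} {A : Set V} {v z : V}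
    (h : Relation.TransGen (fun u w => E u w ∧ w ∉ A) v z) :
    v ∉ A → Relation.TransGen (fun u w => E u w ∧ u ∉ A) v z := by
  induction h using Relation.TransGen.head_induction_on with
  | single h => exact fun hv => Relation.TransGen.single ⟨h.1, hv⟩
  | head h' _ ih => exact fun hv => Relation.TransGen.head ⟨h'.1, hv⟩ (ih h'.2)

/-- A node reachable in `G_Ā` is outside `A`. -/
private lemma trans_in_target {V : Type*} {E : V → V → Prop} {A : Set V} {v z : V}
    (h : Relation.TransGen (fun u w => E u w ∧ w ∉ A) v z) : z ∉ A := by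
  induction h with
  | single h => exact h.2
  | tail _ h _ => exact h.2

/-- Equivalence of checking conditions, part (i). For a DAG `G` with edge
relation `E` and pairwise disjoint node sets `A, B, C, D`: `B` is d-separated from `C`
given `D` in the info-intervention graph `G^{σ(x̃_A)}` (all edges out of `A` removed) iff
`B` is d-separated from `C` given `A ∪ D` in `G_{Ā}` (all edges into `A` removed). -/
theorem dsep_equivalence_i {V : Type*} (E : V → V → Prop)
    (hacyc : ∀ v, ¬ Relation.TransGen E v v)
    (A B C D : Set V)
    (hAB : Disjoint A B) (hAC : Disjoint A C) (hAD : Disjoint A D)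
    (hBC : Disjoint B C) (hBD : Disjoint B D) (hCD : Disjoint C D) :
    dSep (fun u v => E u v ∧ u ∉ A) B C D
      ↔ dSep (fun u v => E u v ∧ v ∉ A) B C (A ∪ D) := by
  constructor
  · -- G^σ, D  ⟹  G_Ā, A ∪ D
    intro h1 n f hf0 hfn hadj
    by_cases hEx : ∃ i, 0 < i ∧ i < n ∧ f i ∈ A
    · -- the walk passes through A internally: that node is a non-collider in A ∪ D
      obtain ⟨i, hi0, hin, hiA⟩ := hEx
      refine ⟨i, hi0, hin, Or.inl ⟨?_, Or.inl hiA⟩⟩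
      rintro ⟨⟨-, h⟩, -⟩
      exact h hiA
    · push_neg at hEx
      have hnotA : ∀ i ≤ n, f i ∉ A := by
        intro i hin'
        rcases Nat.eq_zero_or_pos i with h0 | h0
        · subst h0; exact fun h => Set.disjoint_left.mp hAB h hf0
        · rcases lt_or_eq_of_le hin' with hlt | heq
          · exact hEx i h0 hlt
          · subst heq; exact fun h => Set.disjoint_left.mp hAC h hfn
      -- the same walk is a walk in G^σ
      have hadj1 : ∀ i < n, (E (f i) (f (i+1)) ∧ f i ∉ A) ∨
          (E (f (i+1)) (f i) ∧ f (i+1) ∉ A) := by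
        intro i hi
        rcases hadj i hi with ⟨he, -⟩ | ⟨he, -⟩
        · exact Or.inl ⟨he, hnotA i hi.le⟩
        · exact Or.inr ⟨he, hnotA (i+1) hi⟩
      obtain ⟨i, hi0, hin, hb⟩ := h1 n f hf0 hfn hadj1
      have hiM : f i ∉ A := hnotA i hin.le
      have hiL : f (i-1) ∉ A := hnotA (i-1) (by omega)
      have hiR : f (i+1) ∉ A := hnotA (i+1) (by omega)
      have hcoll : IsCollider (fun u v => E u v ∧ u ∉ A) (f (i-1)) (f i) (f (i+1)) ↔
          IsCollider (fun u v => E u v ∧ v ∉ A) (f (i-1)) (f i) (f (i+1)) := by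
        constructor
        · rintro ⟨⟨h1', -⟩, ⟨h2', -⟩⟩; exact ⟨⟨h1', hiM⟩, ⟨h2', hiM⟩⟩
        · rintro ⟨⟨h1', -⟩, ⟨h2', -⟩⟩; exact ⟨⟨h1', hiL⟩, ⟨h2', hiR⟩⟩
      refine ⟨i, hi0, hin, ?_⟩
      rcases hb with ⟨hnc, hiD⟩ | ⟨hc, hiD, hdesc⟩
      · exact Or.inl ⟨fun hc => hnc (hcoll.mpr hc), Or.inr hiD⟩
      · refine Or.inr ⟨hcoll.mp hc, ?_, ?_⟩
        · rintro (h | h)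
          · exact hiM h
          · exact hiD h
        · rintro z (hz | hz) ht
          · exact trans_in_target ht hz
          · exact hdesc z hz (trans_in_to_out ht hiM)
  · -- G_Ā, A ∪ D  ⟹  G^σ, D
    intro h2 n f hf0 hfn hadj
    by_cases hEx : ∃ i, 0 < i ∧ i < n ∧ f i ∈ A
    · -- the walk passes through A internally: that node is a childless collider not in D
      obtain ⟨i, hi0, hin, hiA⟩ := hEx
      have hstep : i - 1 + 1 = i := by omega
      have hL : E (f (i-1)) (f i) ∧ f (i-1) ∉ A := by
        rcases hadj (i-1) (by omega) with h | h
        · rw [hstep] at h; exact h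
        · rw [hstep] at h; exact absurd hiA h.2
      have hR : E (f (i+1)) (f i) ∧ f (i+1) ∉ A := by
        rcases hadj i hin with h | h
        · exact absurd hiA h.2
        · exact h
      refine ⟨i, hi0, hin, Or.inr ⟨⟨⟨hL.1, hL.2⟩, ⟨hR.1, hR.2⟩⟩, ?_, ?_⟩⟩
      · exact fun h => Set.disjoint_left.mp hAD hiA h
      · intro z _ ht
        obtain ⟨b, hb, -⟩ := Relation.TransGen.head'_iff.mp ht
        exact hb.2 hiA
    · push_neg at hEx
      have hnotA : ∀ i ≤ n, f i ∉ A := by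
        intro i hin'
        rcases Nat.eq_zero_or_pos i with h0 | h0
        · subst h0; exact fun h => Set.disjoint_left.mp hAB h hf0
        · rcases lt_or_eq_of_le hin' with hlt | heq
          · exact hEx i h0 hlt
          · subst heq; exact fun h => Set.disjoint_left.mp hAC h hfn
      have hadj2 : ∀ i < n, (E (f i) (f (i+1)) ∧ f (i+1) ∉ A) ∨
          (E (f (i+1)) (f i) ∧ f i ∉ A) := by
        intro i hi
        rcases hadj i hi with ⟨he, -⟩ | ⟨he, -⟩
        · exact Or.inl ⟨he, hnotA (i+1) hi⟩
        · exact Or.inr ⟨he, hnotA i hi.le⟩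
      obtain ⟨i, hi0, hin, hb⟩ := h2 n f hf0 hfn hadj2
      have hiM : f i ∉ A := hnotA i hin.le
      have hiL : f (i-1) ∉ A := hnotA (i-1) (by omega)
      have hiR : f (i+1) ∉ A := hnotA (i+1) (by omega)
      have hcoll : IsCollider (fun u v => E u v ∧ u ∉ A) (f (i-1)) (f i) (f (i+1)) ↔
          IsCollider (fun u v => E u v ∧ v ∉ A) (f (i-1)) (f i) (f (i+1)) := by
        constructor
        · rintro ⟨⟨h1', -⟩, ⟨h2', -⟩⟩; exact ⟨⟨h1', hiM⟩, ⟨h2', hiM⟩⟩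
        · rintro ⟨⟨h1', -⟩, ⟨h2', -⟩⟩; exact ⟨⟨h1', hiL⟩, ⟨h2', hiR⟩⟩
      refine ⟨i, hi0, hin, ?_⟩
      rcases hb with ⟨hnc, hiAD⟩ | ⟨hc, hiAD, hdesc⟩
      · refine Or.inl ⟨fun hc => hnc (hcoll.mp hc), ?_⟩
        rcases hiAD with h | h
        · exact absurd h hiM
        · exact h
      · refine Or.inr ⟨hcoll.mpr hc, fun h => hiAD (Or.inr h), ?_⟩
        intro z hz ht
        have hzA : z ∉ A := fun h => Set.disjoint_left.mp hAD h hz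
        exact hdesc z (Or.inr hz) (trans_out_to_in ht hzA)
end

section
/- (Equivalence of checking conditions, part (iii)) For a DAG G and pairwise disjoint node sets A, B, C, D: B is d-separated from C given D in the graph obtained from G^{σ(x̃_A)} by removing all edges into C \ anc(D), if and only if B is d-separated from C given A ∪ D in the graph obtained from G by removing all edges into A and all edges into C \ anc(D). -/
/-- The set of ancestors of `D`: nodes with a directed path of length ≥ 1 into `D`. -/
def ancSet {V : Type*} (E : V → V → Prop) (D : Set V) : Set V :=
  {v | ∃ d ∈ D, Relation.TransGen E v d}

/-!
Write `r` for the graph with the edges into `C \ anc(D)` removed. On nodes outside `A`, the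
graphs "edges out of `A` removed" and "edges into `A` removed" agree, and so do their
descendant relations, so the two criteria agree on walks avoiding `A`. A walk through an
internal node `a ∈ A` is blocked under both criteria: without edges out of `A`, `a` is a
collider with no descendants and `a ∉ D`; without edges into `A`, `a` is a non-collider
in `A ∪ D`.
-/

/-- The graph `G^{σ(x̃_A)}`. -/
def deleteOut {V : Type*} (r : V → V → Prop) (A : Set V) : V → V → Prop :=
  fun u v => r u v ∧ u ∉ A

/-- The graph `G_{\bar A}`. -/
def deleteIn {V : Type*} (r : V → V → Prop) (A : Set V) : V → V → Prop :=
  fun u v => r u v ∧ v ∉ A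

def IsWalk {V : Type*} (r : V → V → Prop) (f : ℕ → V) (n : ℕ) : Prop :=
  ∀ i < n, r (f i) (f (i + 1)) ∨ r (f (i + 1)) (f i)

section DeleteOutDeleteIn

variable {V : Type*} {r : V → V → Prop} {A : Set V}

lemma deleteOut_iff_deleteIn {u v : V} (hu : u ∉ A) (hv : v ∉ A) :
    deleteOut r A u v ↔ deleteIn r A u v := by
  simp only [deleteOut, deleteIn, hu, hv, not_false_eq_true, and_true]

lemma notMem_of_transGen_deleteIn {u v : V} (h : Relation.TransGen (deleteIn r A) u v) :
    v ∉ A := by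
  obtain ⟨w, -, hw⟩ := Relation.TransGen.tail'_iff.mp h
  exact hw.2

lemma transGen_deleteIn_of_transGen_deleteOut {u v : V}
    (h : Relation.TransGen (deleteOut r A) u v) (hv : v ∉ A) :
    Relation.TransGen (deleteIn r A) u v := by
  induction h with
  | single h => exact .single ⟨h.1, hv⟩
  | tail _ h ih => exact (ih h.2).tail ⟨h.1, hv⟩

lemma transGen_deleteOut_of_transGen_deleteIn {u v : V}
    (h : Relation.TransGen (deleteIn r A) u v) (hu : u ∉ A) :
    Relation.TransGen (deleteOut r A) u v := by
  induction h with
  | single h => exact .single ⟨h.1, hu⟩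
  | tail huw h ih => exact ih.tail ⟨h.1, notMem_of_transGen_deleteIn huw⟩

lemma transGen_deleteOut_iff_transGen_deleteIn {u v : V} (hu : u ∉ A) (hv : v ∉ A) :
    Relation.TransGen (deleteOut r A) u v ↔ Relation.TransGen (deleteIn r A) u v :=
  ⟨(transGen_deleteIn_of_transGen_deleteOut · hv),
    (transGen_deleteOut_of_transGen_deleteIn · hu)⟩

lemma isCollider_deleteOut_iff {a b c : V} (ha : a ∉ A) (hb : b ∉ A) (hc : c ∉ A) :
    IsCollider (deleteOut r A) a b c ↔ IsCollider (deleteIn r A) a b c := by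
  rw [IsCollider, IsCollider, deleteOut_iff_deleteIn ha hb, deleteOut_iff_deleteIn hc hb]

lemma isWalk_deleteOut_iff {f : ℕ → V} {n : ℕ} (hf : ∀ i ≤ n, f i ∉ A) :
    IsWalk (deleteOut r A) f n ↔ IsWalk (deleteIn r A) f n := by
  refine forall₂_congr fun i hi => ?_
  rw [deleteOut_iff_deleteIn (hf i hi.le) (hf (i + 1) hi),
    deleteOut_iff_deleteIn (hf (i + 1) hi) (hf i hi.le)]

lemma blockedAt_deleteOut_iff {D : Set V} (hAD : Disjoint A D) {f : ℕ → V} {i : ℕ}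
    (hprev : f (i - 1) ∉ A) (hi : f i ∉ A) (hnext : f (i + 1) ∉ A) :
    BlockedAt (deleteOut r A) D f i ↔ BlockedAt (deleteIn r A) (A ∪ D) f i := by
  have hZ : f i ∈ A ∪ D ↔ f i ∈ D := by simp [hi]
  have hdesc : (∀ z ∈ D, ¬ Relation.TransGen (deleteOut r A) (f i) z) ↔
      ∀ z ∈ A ∪ D, ¬ Relation.TransGen (deleteIn r A) (f i) z := by
    refine ⟨fun h z hz htg => ?_, fun h z hz htg => ?_⟩
    · rcases hz with hzA | hzD
      · exact notMem_of_transGen_deleteIn htg hzA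
      · exact h z hzD (transGen_deleteOut_of_transGen_deleteIn htg hi)
    · exact h z (.inr hz)
        (transGen_deleteIn_of_transGen_deleteOut htg (hAD.notMem_of_mem_right hz))
  rw [BlockedAt, BlockedAt, isCollider_deleteOut_iff hprev hi hnext, hZ, hdesc]

lemma blockedAt_deleteIn_of_mem {D : Set V} {f : ℕ → V} {i : ℕ} (hi : f i ∈ A) :
    BlockedAt (deleteIn r A) (A ∪ D) f i :=
  .inl ⟨fun hcol => hcol.1.2 hi, .inl hi⟩

lemma blockedAt_deleteOut_of_mem {D : Set V} (hAD : Disjoint A D) {f : ℕ → V} {n i : ℕ}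
    (hf : IsWalk (deleteOut r A) f n) (hi0 : 0 < i) (hin : i < n) (hi : f i ∈ A) :
    BlockedAt (deleteOut r A) D f i := by
  have hin' : deleteOut r A (f (i - 1)) (f i) := by
    have := hf (i - 1) (by omega)
    rw [Nat.sub_add_cancel hi0] at this
    exact this.resolve_right fun h => h.2 hi
  have hout : deleteOut r A (f (i + 1)) (f i) := (hf i hin).resolve_left fun h => h.2 hi
  refine .inr ⟨⟨hin', hout⟩, hAD.notMem_of_mem_left hi, fun z _ htg => ?_⟩
  obtain ⟨w, hw, -⟩ := Relation.TransGen.head'_iff.mp htg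
  exact hw.2 hi

end DeleteOutDeleteIn

lemma dSep_iff_of_blockedAt_mem {V : Type*} {r : V → V → Prop} {A B C Z : Set V}
    (hAB : Disjoint A B) (hAC : Disjoint A C)
    (hblocked : ∀ n f i, IsWalk r f n → 0 < i → i < n → f i ∈ A → BlockedAt r Z f i) :
    dSep r B C Z ↔ ∀ n f, f 0 ∈ B → f n ∈ C → (∀ i ≤ n, f i ∉ A) → IsWalk r f n →
      ∃ i, 0 < i ∧ i < n ∧ BlockedAt r Z f i := by
  refine ⟨fun h n f hB hC _ hf => h n f hB hC hf, fun h n f hB hC hf => ?_⟩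
  by_cases hA : ∃ i, 0 < i ∧ i < n ∧ f i ∈ A
  · obtain ⟨i, hi0, hin, hi⟩ := hA
    exact ⟨i, hi0, hin, hblocked n f i hf hi0 hin hi⟩
  · push Not at hA
    refine h n f hB hC (fun i hi => ?_) hf
    rcases Nat.eq_zero_or_pos i with rfl | hi0
    · exact hAB.notMem_of_mem_right hB
    rcases hi.eq_or_lt with rfl | hin
    · exact hAC.notMem_of_mem_right hC
    · exact hA i hi0 hin

theorem dSep_deleteOut_iff_dSep_deleteIn {V : Type*} (r : V → V → Prop) {A B C D : Set V}
    (hAB : Disjoint A B) (hAC : Disjoint A C) (hAD : Disjoint A D) :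
    dSep (deleteOut r A) B C D ↔ dSep (deleteIn r A) B C (A ∪ D) := by
  rw [dSep_iff_of_blockedAt_mem hAB hAC fun n f i hf hi0 hin hi =>
      blockedAt_deleteOut_of_mem hAD hf hi0 hin hi,
    dSep_iff_of_blockedAt_mem hAB hAC fun n f i _ _ _ hi => blockedAt_deleteIn_of_mem hi]
  refine forall₂_congr fun n f => forall₃_congr fun _ _ hf => ?_
  rw [isWalk_deleteOut_iff hf]
  refine imp_congr_right fun _ => exists_congr fun i => and_congr_right fun _ =>
    and_congr_right fun hin =>
      blockedAt_deleteOut_iff hAD (hf _ (by omega)) (hf i hin.le) (hf _ hin)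

theorem dsep_equivalence_iii_general {V : Type*} (E : V → V → Prop)
    (A B C D : Set V)
    (hAB : Disjoint A B) (hAC : Disjoint A C) (hAD : Disjoint A D) :
    dSep (fun u v => (E u v ∧ u ∉ A) ∧ v ∉ C \ ancSet E D) B C D
      ↔ dSep (fun u v => (E u v ∧ v ∉ A) ∧ v ∉ C \ ancSet E D) B C (A ∪ D) := by
  convert dSep_deleteOut_iff_dSep_deleteIn (deleteIn E (C \ ancSet E D)) hAB hAC hAD using 2 <;>
    exact funext₂ fun _ _ => propext and_right_comm

/-- Equivalence of checking conditions, part (iii). For a DAG `G` and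
pairwise disjoint node sets `A, B, C, D`, with `C₂ = C \ anc(D)`: `B` is d-separated from
`C` given `D` in the graph obtained from `G^{σ(x̃_A)}` (edges out of `A` removed) by
removing all edges into `C₂`, iff `B` is d-separated from `C` given `A ∪ D` in the graph
obtained from `G` by removing all edges into `A` and all edges into `C₂`. -/
theorem dsep_equivalence_iii {V : Type*} (E : V → V → Prop)
    (hacyc : ∀ v, ¬ Relation.TransGen E v v)
    (A B C D : Set V)
    (hAB : Disjoint A B) (hAC : Disjoint A C) (hAD : Disjoint A D)
    (hBC : Disjoint B C) (hBD : Disjoint B D) (hCD : Disjoint C D) :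
    dSep (fun u v => (E u v ∧ u ∉ A) ∧ v ∉ C \ ancSet E D) B C D
      ↔ dSep (fun u v => (E u v ∧ v ∉ A) ∧ v ∉ C \ ancSet E D) B C (A ∪ D) :=
  dsep_equivalence_iii_general E A B C D hAB hAC hAD
end

section
/- (Rule 3, full version) In an info-causal DAG with pairwise disjoint node sets A, B, C, D, write C₁ = C ∩ anc(D) and C₂ = C \ anc(D). If B is d-separated from C given D in the graph obtained from G^{σ(x̃_A)} by deleting all edges into C₂, then P(x_B | σ(x̃_A), σ(x̃_C), x_D) = P(x_B | σ(x̃_A), x_D). -/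
open Finset

namespace InfoRule3

section Graph

variable {V : Type*}

def removeIn (E : V → V → Prop) (K : Set V) : V → V → Prop := fun u v => E u v ∧ v ∉ K

def removeOut (E : V → V → Prop) (K : Set V) : V → V → Prop := fun u v => E u v ∧ u ∉ K

variable {E : V → V → Prop}

lemma exists_reverse_path_of_transGen {c b : V} (h : Relation.TransGen E c b) :
    ∃ (n : ℕ) (f : ℕ → V), 0 < n ∧ f 0 = b ∧ f n = c ∧
      ∀ i < n, E (f (i + 1)) (f i) ∧ Relation.TransGen E c (f i) := by
  induction h using Relation.TransGen.head_induction_on with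
  | @single c h =>
    refine ⟨1, fun i => if i = 0 then b else c, one_pos, rfl, rfl, fun i hi => ?_⟩
    obtain rfl : i = 0 := by omega
    exact ⟨h, .single h⟩
  | @head c m hcm _ ih =>
    obtain ⟨n, f, hn, hf0, hfn, hf⟩ := ih
    refine ⟨n + 1, Function.update f (n + 1) c, n.succ_pos, ?_, by simp, fun i hi => ?_⟩
    · rw [Function.update_of_ne (by omega), hf0]
    rw [Function.update_of_ne (by omega : i ≠ n + 1)]
    rcases (by omega : i < n ∨ i = n) with hi | rfl
    · rw [Function.update_of_ne (by omega)]
      exact ⟨(hf i hi).1, .head hcm (hf i hi).2⟩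
    · rw [Function.update_self, hfn]
      exact ⟨hcm, .single hcm⟩

/-- On a directed path every inner vertex is a non-collider, so only a vertex of `Z` can block
it. -/
lemma dSep.exists_mem_of_transGen {B C Z : Set V} (hd : dSep E B C Z)
    (hE : ∀ u v, E u v → ¬ E v u) {c b : V} (hc : c ∈ C) (hb : b ∈ B)
    (h : Relation.TransGen E c b) : ∃ z ∈ Z, Relation.TransGen E c z := by
  obtain ⟨n, f, -, hf0, hfn, hf⟩ := exists_reverse_path_of_transGen h
  obtain ⟨i, hi0, hin, hblocked⟩ :=
    hd n f (hf0 ▸ hb) (hfn ▸ hc) fun i hi => .inr (hf i hi).1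
  rcases hblocked with ⟨-, hz⟩ | ⟨hcol, -⟩
  · exact ⟨f i, hz, (hf i (by omega)).2⟩
  · have hback := (hf (i - 1) (by omega)).1
    rw [Nat.sub_add_cancel hi0] at hback
    exact (hE _ _ hcol.1 hback).elim

lemma dSep.of_subset_right {B C C' Z : Set V} (hd : dSep E B C Z) (hC : C' ⊆ C) :
    dSep E B C' Z :=
  fun n f h0 hn hw => hd n f h0 (hC hn) hw

lemma dSep.of_le {E' : V → V → Prop} {B C Z : Set V} (hd : dSep E' B C Z)
    (hle : ∀ u v, E u v → E' u v) (hE' : ∀ u v, E' u v → ¬ E' v u) : dSep E B C Z := by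
  intro n f h0 hn hw
  obtain ⟨i, hi0, hin, hblocked⟩ :=
    hd n f h0 hn fun i hi => (hw i hi).imp (hle _ _) (hle _ _)
  refine ⟨i, hi0, hin, ?_⟩
  rcases hblocked with ⟨hnc, hz⟩ | ⟨hcol, hz, hdesc⟩
  · exact .inl ⟨fun hcol => hnc ⟨hle _ _ hcol.1, hle _ _ hcol.2⟩, hz⟩
  refine .inr ⟨⟨?_, ?_⟩, hz, fun z hz ht => hdesc z hz (Relation.TransGen.mono hle _ _ ht)⟩
  · have hprev := hw (i - 1) (by omega)
    rw [Nat.sub_add_cancel hi0] at hprev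
    exact hprev.resolve_right fun h => hE' _ _ hcol.1 (hle _ _ h)
  · exact (hw i hin).resolve_left fun h => hE' _ _ hcol.2 (hle _ _ h)

variable {K : Set V}

lemma transGen_removeIn_of_transGen_removeOut {x z : V}
    (hK : ∀ k ∈ K, ¬ Relation.ReflTransGen E k z) (h : Relation.TransGen (removeOut E K) x z) :
    Relation.TransGen (removeIn E K) x z := by
  induction h using Relation.TransGen.head_induction_on with
  | single h => exact .single ⟨h.1, fun hz => hK z hz .refl⟩
  | head h hmz ih =>
    have hmz' := Relation.TransGen.mono (fun _ _ => And.left) _ _ hmz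
    exact .head ⟨h.1, fun hm => hK _ hm hmz'.to_reflTransGen⟩ ih

/-- Cutting a directed path from `K` to `b ∉ K` at its last vertex in `K`. -/
lemma exists_transGen_removeIn_of_transGen {k b : V} (hk : k ∈ K) (hb : b ∉ K)
    (h : Relation.TransGen E k b) : ∃ k' ∈ K, Relation.TransGen (removeIn E K) k' b := by
  suffices ∀ a, Relation.TransGen E a b →
      (∃ k' ∈ K, Relation.TransGen (removeIn E K) k' b) ∨ Relation.TransGen (removeIn E K) a b
    from (this k h).elim id fun h' => ⟨k, hk, h'⟩
  intro a h
  induction h using Relation.TransGen.head_induction_on with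
  | single h => exact .inr (.single ⟨h, hb⟩)
  | @head a m ham _ ih =>
    rcases ih with h | hmb
    · exact .inl h
    by_cases hm : m ∈ K
    · exact .inl ⟨m, hm, hmb⟩
    · exact .inr (.head ⟨ham, hm⟩ hmb)

lemma not_transGen_of_dSep_removeIn {B C Z : Set V} (hd : dSep (removeIn E K) B C Z)
    (hE : ∀ u v, E u v → ¬ E v u) (hKC : K ⊆ C) (hBK : Disjoint B K)
    (hKZ : ∀ k ∈ K, ∀ z ∈ Z, ¬ Relation.TransGen E k z) {k b : V} (hk : k ∈ K) (hb : b ∈ B) :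
    ¬ Relation.TransGen E k b := by
  intro h
  obtain ⟨k', hk', hk'b⟩ := exists_transGen_removeIn_of_transGen hk (hBK.notMem_of_mem_left hb) h
  obtain ⟨z, hz, hk'z⟩ :=
    dSep.exists_mem_of_transGen hd (fun u v h h' => hE u v h.1 h'.1) (hKC hk') hb hk'b
  exact hKZ k' hk' z hz (Relation.TransGen.mono (fun _ _ => And.left) _ _ hk'z)

lemma isCollider_removeIn_iff {a b c : V} (ha : a ∉ K) (hb : b ∉ K) (hc : c ∉ K) :
    IsCollider (removeIn E K) a b c ↔ IsCollider (removeOut E K) a b c := by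
  simp [IsCollider, removeIn, removeOut, ha, hb, hc]

/-- A walk through `K` has a collider in `K` once the edges out of `K` are gone, and that collider
has no descendant in `Z`; every other walk is already a walk of `removeIn E K`. -/
lemma dSep_removeOut_of_dSep_removeIn {B C Z : Set V} (hd : dSep (removeIn E K) B C Z)
    (hBK : Disjoint B K) (hCK : Disjoint C K)
    (hKZ : ∀ k ∈ K, ∀ z ∈ Z, ¬ Relation.ReflTransGen E k z) :
    dSep (removeOut E K) B C Z := by
  intro n f h0 hn hw
  by_cases hmid : ∃ i, 0 < i ∧ i < n ∧ f i ∈ K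
  · obtain ⟨i, hi0, hin, hiK⟩ := hmid
    refine ⟨i, hi0, hin, .inr ⟨⟨?_, ?_⟩, fun hz => hKZ _ hiK _ hz .refl, fun z hz h => ?_⟩⟩
    · have hprev := hw (i - 1) (by omega)
      rw [Nat.sub_add_cancel hi0] at hprev
      exact hprev.resolve_right fun h => h.2 hiK
    · exact (hw i hin).resolve_left fun h => h.2 hiK
    · exact hKZ _ hiK z hz (Relation.TransGen.mono (fun _ _ => And.left) _ _ h).to_reflTransGen
  push Not at hmid
  have hnotK : ∀ j ≤ n, f j ∉ K := by
    intro j hj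
    rcases Nat.eq_zero_or_pos j with rfl | hj0
    · exact hBK.notMem_of_mem_left h0
    rcases hj.lt_or_eq with hjn | rfl
    · exact hmid j hj0 hjn
    · exact hCK.notMem_of_mem_left hn
  obtain ⟨i, hi0, hin, hblocked⟩ := hd n f h0 hn fun i hi =>
    (hw i hi).imp (fun h => ⟨h.1, hnotK (i + 1) hi⟩) (fun h => ⟨h.1, hnotK i hi.le⟩)
  have hcol := isCollider_removeIn_iff (E := E) (hnotK (i - 1) (by omega)) (hnotK i hin.le)
    (hnotK (i + 1) hin)
  refine ⟨i, hi0, hin, ?_⟩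
  rcases hblocked with ⟨hnc, hz⟩ | ⟨hc, hz, hdesc⟩
  · exact .inl ⟨hcol.not.mp hnc, hz⟩
  · exact .inr ⟨hcol.mp hc, hz, fun z hz h =>
      hdesc z hz (transGen_removeIn_of_transGen_removeOut (fun k hk => hKZ k hk z hz) h)⟩

end Graph

section SdiffAncestors

variable {V : Type*} [DecidableEq V] {pa : V → Finset V} {A B C D ancD : Finset V}

lemma not_reflTransGen_of_mem_sdiff_anc
    (hanc : ∀ v, v ∈ ancD ↔ ∃ d ∈ D, Relation.TransGen (fun u w : V => u ∈ pa w) v d)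
    (hCD : Disjoint C D) {k w : V} (hk : k ∈ C \ ancD) (hw : w ∈ ancD ∨ w ∈ D) :
    ¬ Relation.ReflTransGen (removeOut (fun u v => u ∈ pa v) A) k w := by
  intro h
  obtain ⟨hkC, hkD⟩ := mem_sdiff.mp hk
  rcases Relation.reflTransGen_iff_eq_or_transGen.mp
    (Relation.ReflTransGen.mono (fun _ _ => And.left) _ _ h) with rfl | h
  · exact hw.elim hkD (disjoint_left.mp hCD hkC)
  refine hkD ((hanc k).mpr ?_)
  rcases hw with hw | hw
  · obtain ⟨d, hd, hwd⟩ := (hanc w).mp hw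
    exact ⟨d, hd, h.trans hwd⟩
  · exact ⟨w, hw, h⟩

lemma dSep_of_sdiff_anc_subset
    (hacyc : ∀ v, ¬ Relation.TransGen (fun u w : V => u ∈ pa w) v v)
    (hanc : ∀ v, v ∈ ancD ↔ ∃ d ∈ D, Relation.TransGen (fun u w : V => u ∈ pa w) v d)
    (hBC : Disjoint B C) (hCD : Disjoint C D)
    (hd : dSep (removeIn (removeOut (fun u v => u ∈ pa v) A) ↑(C \ ancD)) B C D)
    {A' : Finset V} (hA' : A ∪ C \ ancD ⊆ A') :
    dSep (fun u v => u ∈ pa v ∧ u ∉ A') B ↑(C ∩ ancD) D := by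
  refine dSep.of_le (dSep_removeOut_of_dSep_removeIn (dSep.of_subset_right hd (by simp))
      (disjoint_coe.mpr (hBC.mono_right sdiff_subset))
      (disjoint_coe.mpr (disjoint_sdiff_inter C ancD).symm)
      fun k hk z hz => not_reflTransGen_of_mem_sdiff_anc hanc hCD hk (.inr hz))
    (fun u v h => ⟨⟨h.1, fun hu => h.2 (hA' (mem_union_left _ hu))⟩,
      fun hu => h.2 (hA' (mem_union_right _ hu))⟩)
    fun u v h h' => hacyc u (.head h.1.1 (.single h'.1.1))

lemma not_reflTransGen_of_mem_sdiff_anc_of_dSep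
    (hacyc : ∀ v, ¬ Relation.TransGen (fun u w : V => u ∈ pa w) v v)
    (hanc : ∀ v, v ∈ ancD ↔ ∃ d ∈ D, Relation.TransGen (fun u w : V => u ∈ pa w) v d)
    (hBC : Disjoint B C) (hCD : Disjoint C D)
    (hd : dSep (removeIn (removeOut (fun u v => u ∈ pa v) A) ↑(C \ ancD)) B C D)
    {k w : V} (hk : k ∈ C \ ancD) (hw : w ∈ B ∨ w ∈ ancD ∨ w ∈ D) :
    ¬ Relation.ReflTransGen (removeOut (fun u v => u ∈ pa v) A) k w := by
  rcases hw with hwB | hw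
  · intro h
    rcases Relation.reflTransGen_iff_eq_or_transGen.mp h with rfl | h
    · exact disjoint_left.mp hBC hwB (mem_sdiff.mp hk).1
    · exact not_transGen_of_dSep_removeIn hd (fun u v h h' => hacyc u (.head h.1 (.single h'.1)))
        (by simp) (disjoint_coe.mpr (hBC.mono_right sdiff_subset))
        (fun k hk z hz h => not_reflTransGen_of_mem_sdiff_anc hanc hCD hk (.inr hz)
          h.to_reflTransGen) hk hwB h
  · exact not_reflTransGen_of_mem_sdiff_anc hanc hCD hk hw

end SdiffAncestors

section Marginal

variable {V Ω : Type*} [Fintype V] [DecidableEq V] [Fintype Ω] [DecidableEq Ω]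

lemma Marg_congr_point (p : (V → Ω) → ℝ) (S : Finset V) {y y' : V → Ω}
    (h : ∀ i ∈ S, y i = y' i) : Marg p S y = Marg p S y' :=
  sum_congr rfl fun x _ =>
    if_congr (forall₂_congr fun i hi => by rw [h i hi]) rfl rfl

lemma Marg_congr {p p' : (V → Ω) → ℝ} {S : Finset V} {y : V → Ω}
    (h : ∀ x, (∀ i ∈ S, x i = y i) → p x = p' x) : Marg p S y = Marg p' S y :=
  sum_congr rfl fun x _ => by split_ifs with hx; exacts [h x hx, rfl]

lemma sum_eq_sum_ite_update {M : Type*} [AddCommMonoid M] (u : V) (c : Ω)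
    (F : (V → Ω) → M) :
    ∑ x, F x = ∑ x, if x u = c then ∑ a, F (Function.update x u a) else 0 := by
  have hinv : Function.Involutive
      fun p : (V → Ω) × Ω => (Function.update p.1 u p.2, p.1 u) := by
    rintro ⟨x, a⟩
    simp
  calc ∑ x, F x = ∑ p : (V → Ω) × Ω, if p.2 = c then F p.1 else 0 := by
        simp [Fintype.sum_prod_type]
    _ = ∑ p : (V → Ω) × Ω, if p.1 u = c then F (Function.update p.1 u p.2) else 0 :=
        (Equiv.sum_comp hinv.toPerm _).symm
    _ = _ := by simp [Fintype.sum_prod_type, sum_ite_irrel]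

lemma Marg_eq_Marg_insert {p p' : (V → Ω) → ℝ} {R : Finset V} {u : V} (hu : u ∉ R)
    (h : ∀ x, ∑ a, p (Function.update x u a) = p' x) (y : V → Ω) :
    Marg p R y = Marg p' (insert u R) y := by
  unfold Marg
  rw [sum_eq_sum_ite_update u (y u)]
  refine sum_congr rfl fun x _ => ?_
  have hR : ∀ a, (∀ i ∈ R, Function.update x u a i = y i) ↔ ∀ i ∈ R, x i = y i :=
    fun a => forall₂_congr fun i hi => by rw [Function.update_of_ne (ne_of_mem_of_not_mem hi hu)]
  simp only [hR, forall_mem_insert, ite_and]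
  split_ifs <;> simp [h]

lemma div_eq_div_of_condIndep {p : (V → Ω) → ℝ} {S T W : Finset V} (h : CondIndep p S T W)
    {y : V → Ω} (hW : Marg p W y ≠ 0) (hTW : Marg p (T ∪ W) y ≠ 0) :
    Marg p (S ∪ W) y / Marg p W y = Marg p (S ∪ T ∪ W) y / Marg p (T ∪ W) y := by
  rw [div_eq_div_iff hW hTW]
  exact (h y).symm

end Marginal

lemma wellFounded_swap_of_acyclic {V : Type*} [Finite V] {r : V → V → Prop}
    (h : ∀ v, ¬ Relation.TransGen r v v) : WellFounded (Function.swap r) := by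
  have : Std.Irrefl (Function.swap (Relation.TransGen r)) := ⟨h⟩
  exact Subrelation.wf (fun h => .single h)
    (Finite.wellFounded_of_trans_of_irrefl (Function.swap (Relation.TransGen r)))

section Truncation

variable {V Ω : Type*} [DecidableEq V]

noncomputable def infoDistOn (q : V → Ω → (V → Ω) → ℝ) (Z U : Finset V) (xt x : V → Ω) : ℝ :=
  ∏ v ∈ U, q v (x v) (fun j => if j ∈ Z then xt j else x j)

lemma infoDist_eq_infoDistOn_univ [Fintype V] (q : V → Ω → (V → Ω) → ℝ) (Z : Finset V)
    (xt : V → Ω) : infoDist q Z xt = infoDistOn q Z univ xt := rfl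

variable {pa : V → Finset V} {q : V → Ω → (V → Ω) → ℝ} {Z : Finset V} {xt : V → Ω}

lemma kernel_update_eq
    (hloc : ∀ v a (x y : V → Ω), (∀ j ∈ pa v, x j = y j) → q v a x = q v a y)
    {u v : V} (h : u ∈ pa v → u ∈ Z) (b a : Ω) (x : V → Ω) :
    q v b (fun j => if j ∈ Z then xt j else Function.update x u a j)
      = q v b (fun j => if j ∈ Z then xt j else x j) := by
  refine hloc v b _ _ fun j hj => ?_
  split_ifs with hjZ
  · rfl
  · exact Function.update_of_ne (by rintro rfl; exact hjZ (h hj)) _ _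

lemma sum_infoDistOn_update [Fintype Ω]
    (hloc : ∀ v a (x y : V → Ω), (∀ j ∈ pa v, x j = y j) → q v a x = q v a y)
    (hnorm : ∀ v x, ∑ a : Ω, q v a x = 1) {U : Finset V} {u : V} (hu : u ∈ U)
    (hchild : ∀ v ∈ U, u ∈ pa v → u ∈ Z) (x : V → Ω) :
    ∑ a, infoDistOn q Z U xt (Function.update x u a) = infoDistOn q Z (U.erase u) xt x := by
  have hfactor : ∀ a, infoDistOn q Z U xt (Function.update x u a)
      = q u a (fun j => if j ∈ Z then xt j else x j) * infoDistOn q Z (U.erase u) xt x := by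
    intro a
    rw [infoDistOn, ← mul_prod_erase _ _ hu, Function.update_self,
      kernel_update_eq hloc (hchild u hu)]
    refine congrArg _ (prod_congr rfl fun v hv => ?_)
    rw [Function.update_of_ne (ne_of_mem_erase hv),
      kernel_update_eq hloc (hchild v (mem_of_mem_erase hv))]
  simp only [hfactor, ← sum_mul, hnorm, one_mul]

variable [Fintype V] [Fintype Ω] [DecidableEq Ω]

lemma Marg_infoDistOn_erase
    (hloc : ∀ v a (x y : V → Ω), (∀ j ∈ pa v, x j = y j) → q v a x = q v a y)
    (hnorm : ∀ v x, ∑ a : Ω, q v a x = 1) {S U : Finset V} {u : V} (hu : u ∈ U) (huS : u ∉ S)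
    (hchild : ∀ v ∈ U, u ∈ pa v → u ∈ Z) (y : V → Ω) :
    Marg (infoDistOn q Z U xt) (S ∪ Uᶜ) y
      = Marg (infoDistOn q Z (U.erase u) xt) (S ∪ (U.erase u)ᶜ) y := by
  rw [Marg_eq_Marg_insert (by simp [huS, hu]) (sum_infoDistOn_update hloc hnorm hu hchild)]
  congr 1
  ext v
  by_cases hv : v = u <;> simp [hv]

/-- The vertices of `U \ T` are summed out one at a time, each time one without children left in
`U`; its kernel is then the only factor that depends on it, and it sums to `1`. -/
lemma Marg_infoDistOn_eq_of_closed
    (hloc : ∀ v a (x y : V → Ω), (∀ j ∈ pa v, x j = y j) → q v a x = q v a y)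
    (hnorm : ∀ v x, ∑ a : Ω, q v a x = 1)
    (hacyc : ∀ v, ¬ Relation.TransGen (fun u w : V => u ∈ pa w) v v) {S T : Finset V}
    (hST : S ⊆ T) (hT : ∀ v ∈ T, ∀ j ∈ pa v, j ∉ Z → j ∈ T) (y : V → Ω) (U : Finset V)
    (hTU : T ⊆ U) :
    Marg (infoDistOn q Z U xt) (S ∪ Uᶜ) y = Marg (infoDistOn q Z T xt) (S ∪ Tᶜ) y := by
  induction U using strongInduction with
  | H U ih =>
    by_cases hUT : U ⊆ T
    · rw [hUT.antisymm hTU]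
    obtain ⟨u, hu, hmin⟩ := (wellFounded_swap_of_acyclic hacyc).has_min (↑(U \ T) : Set V)
      (coe_nonempty.mpr (sdiff_nonempty.mpr hUT))
    obtain ⟨huU, huT⟩ := mem_sdiff.mp hu
    have hchild : ∀ v ∈ U, u ∈ pa v → u ∈ Z := by
      intro v hv huv
      by_contra huZ
      by_cases hvT : v ∈ T
      · exact huT (hT v hvT u huv huZ)
      · exact hmin v (by simp [hv, hvT]) huv
    rw [Marg_infoDistOn_erase hloc hnorm huU (fun h => huT (hST h)) hchild,
      ih _ (erase_ssubset huU) (subset_erase.mpr ⟨hTU, huT⟩)]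

/-- Both marginals reduce to the factors of the ancestral closure of `S`, on whose parents `Z ∪ R`
and `Z` agree. -/
lemma Marg_infoDist_union_of_not_ancestor
    (hloc : ∀ v a (x y : V → Ω), (∀ j ∈ pa v, x j = y j) → q v a x = q v a y)
    (hnorm : ∀ v x, ∑ a : Ω, q v a x = 1)
    (hacyc : ∀ v, ¬ Relation.TransGen (fun u w : V => u ∈ pa w) v v) {R S : Finset V}
    (hR : ∀ j ∈ R, ∀ w ∈ S, ¬ Relation.ReflTransGen (removeOut (fun u v => u ∈ pa v) Z) j w)
    (y : V → Ω) :
    Marg (infoDist q (Z ∪ R) xt) S y = Marg (infoDist q Z xt) S y := by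
  classical
  set T := univ.filter
    fun v => ∃ w ∈ S, Relation.ReflTransGen (removeOut (fun u v => u ∈ pa v) Z) v w
  have hST : S ⊆ T := fun w hw => by simpa [T] using ⟨w, hw, .refl⟩
  have hT : ∀ v ∈ T, ∀ j ∈ pa v, j ∉ Z → j ∈ T := by
    intro v hv j hj hjZ
    obtain ⟨w, hw, hvw⟩ := by simpa [T] using hv
    simpa [T] using ⟨w, hw, .head ⟨hj, hjZ⟩ hvw⟩
  have hZR : ∀ v ∈ T, ∀ j ∈ pa v, j ∈ Z ∪ R ↔ j ∈ Z := by
    intro v hv j hj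
    refine ⟨fun h => ?_, mem_union_left R⟩
    by_contra hjZ
    obtain ⟨w, hw, hjw⟩ := by simpa [T] using hT v hv j hj hjZ
    exact hR j ((mem_union.mp h).resolve_left hjZ) w hw hjw
  have hreduce := fun Z' hT' => Marg_infoDistOn_eq_of_closed (Z := Z') (xt := xt) hloc hnorm
    hacyc hST hT' y univ (subset_univ T)
  simp only [compl_univ, union_empty] at hreduce
  rw [infoDist_eq_infoDistOn_univ, infoDist_eq_infoDistOn_univ, hreduce Z hT,
    hreduce (Z ∪ R) fun v hv j hj hj' => hT v hv j hj fun h => hj' (mem_union_left R h)]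
  refine Marg_congr fun x _ => prod_congr rfl fun v hv => hloc v _ _ _ fun j hj => ?_
  simp only [hZR v hv j hj]

end Truncation

section Intervention

variable {V Ω : Type*} [Fintype V] [DecidableEq V] [Fintype Ω] [DecidableEq Ω]

lemma Marg_infoDist_union_of_pinned (q : V → Ω → (V → Ω) → ℝ) {Z R S : Finset V} {xt y : V → Ω}
    (hRS : R ⊆ S) (hy : ∀ j ∈ R, y j = xt j) :
    Marg (infoDist q (Z ∪ R) xt) S y = Marg (infoDist q Z xt) S y := by
  refine Marg_congr fun x hx => prod_congr rfl fun v _ => congrArg _ (funext fun j => ?_)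
  by_cases hjZ : j ∈ Z
  · simp [hjZ]
  by_cases hjR : j ∈ R
  · simp [hjZ, hjR, hx j (hRS hjR), hy j hjR]
  · simp [hjZ, hjR]

/-- Both sides are conditionals at the point with `x_R = x̃_R`, where the intervention on `R` is
invisible. -/
lemma Marg_div_infoDist_union_eq_of_condIndep (q : V → Ω → (V → Ω) → ℝ) {Z R S W : Finset V}
    {xt y : V → Ω} (hSR : Disjoint S R) (hWR : Disjoint W R)
    (hci : CondIndep (infoDist q (Z ∪ R) xt) S R W) (hci' : CondIndep (infoDist q Z xt) S R W)
    (hW : Marg (infoDist q (Z ∪ R) xt) W y ≠ 0) (hW' : Marg (infoDist q Z xt) W y ≠ 0)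
    (hRW : Marg (infoDist q Z xt) (R ∪ W) (fun j => if j ∈ R then xt j else y j) ≠ 0) :
    Marg (infoDist q (Z ∪ R) xt) (S ∪ W) y / Marg (infoDist q (Z ∪ R) xt) W y
      = Marg (infoDist q Z xt) (S ∪ W) y / Marg (infoDist q Z xt) W y := by
  set y' : V → Ω := fun j => if j ∈ R then xt j else y j
  have hyS : ∀ i ∈ S ∪ W, y i = y' i := fun i hi =>
    (if_neg fun hiR => (mem_union.mp hi).elim (disjoint_left.mp hSR · hiR)
      (disjoint_left.mp hWR · hiR)).symm
  have hyW : ∀ i ∈ W, y i = y' i := fun i hi => hyS i (mem_union_right S hi)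
  have hpin : ∀ T, R ⊆ T → Marg (infoDist q (Z ∪ R) xt) T y' = Marg (infoDist q Z xt) T y' :=
    fun T hT => Marg_infoDist_union_of_pinned q hT fun j hj => if_pos hj
  simp only [Marg_congr_point _ _ hyS, Marg_congr_point _ _ hyW] at hW hW' ⊢
  rw [div_eq_div_of_condIndep hci hW (by rwa [hpin _ subset_union_left]),
    div_eq_div_of_condIndep hci' hW' hRW, hpin _ subset_union_left,
    hpin _ (subset_union_right.trans subset_union_left)]

end Intervention

end InfoRule3

open InfoRule3 in
theorem info_rule3_full_general {V Ω : Type*} [Fintype V] [DecidableEq V]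
    [Fintype Ω] [DecidableEq Ω]
    (pa : V → Finset V) (q : V → Ω → (V → Ω) → ℝ)
    (hloc : ∀ v a (x y : V → Ω), (∀ j ∈ pa v, x j = y j) → q v a x = q v a y)
    (hnorm : ∀ v x, ∑ a : Ω, q v a x = 1)
    (hacyc : ∀ v, ¬ Relation.TransGen (fun u w : V => u ∈ pa w) v v)
    (A B C D : Finset V)
    (hBC : Disjoint B C) (hCD : Disjoint C D)
    (ancD : Finset V)
    (hanc : ∀ v, v ∈ ancD ↔ ∃ d ∈ D, Relation.TransGen (fun u w : V => u ∈ pa w) v d)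
    (xt : V → Ω)
    (hMarkov : ∀ (A' : Finset V) (S T W : Finset V),
      dSep (fun u v => u ∈ pa v ∧ u ∉ A') (S : Set V) (T : Set V) (W : Set V) →
        CondIndep (infoDist q A' xt) S T W)
    (hd : dSep (fun u v => (u ∈ pa v ∧ u ∉ A) ∧ v ∉ C \ ancD)
            (B : Set V) (C : Set V) (D : Set V))
    (y : V → Ω)
    (hpos1 : Marg (infoDist q (A ∪ C) xt) D y ≠ 0)
    (hpos2 : Marg (infoDist q A xt) D y ≠ 0)
    (hpos3 : Marg (infoDist q A xt)
        ((C ∩ ancD) ∪ D) (fun j => if j ∈ C ∩ ancD then xt j else y j) ≠ 0) :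
    Marg (infoDist q (A ∪ C) xt) (B ∪ D) y / Marg (infoDist q (A ∪ C) xt) D y
      = Marg (infoDist q A xt) (B ∪ D) y / Marg (infoDist q A xt) D y := by
  set C₁ := C ∩ ancD
  set C₂ := C \ ancD
  have hA : A ∪ C = A ∪ C₂ ∪ C₁ := by rw [union_assoc, sdiff_union_inter]
  have hci := hMarkov (A ∪ C) B C₁ D
    (dSep_of_sdiff_anc_subset hacyc hanc hBC hCD hd (hA ▸ subset_union_left))
  have hci' := hMarkov (A ∪ C₂) B C₁ D (dSep_of_sdiff_anc_subset hacyc hanc hBC hCD hd le_rfl)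
  have hM : ∀ S : Finset V, (∀ w ∈ S, w ∈ B ∨ w ∈ ancD ∨ w ∈ D) → ∀ z,
      Marg (infoDist q (A ∪ C₂) xt) S z = Marg (infoDist q A xt) S z :=
    fun S hS z => Marg_infoDist_union_of_not_ancestor hloc hnorm hacyc
      (fun k hk w hw => not_reflTransGen_of_mem_sdiff_anc_of_dSep hacyc hanc hBC hCD hd hk
        (hS w hw)) z
  have hMD := hM D fun w hw => .inr (.inr hw)
  rw [hA] at hci hpos1 ⊢
  rw [Marg_div_infoDist_union_eq_of_condIndep q (hBC.mono_right inter_subset_left)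
      (hCD.symm.mono_right inter_subset_left) hci hci' hpos1 (by rwa [hMD])
      (by rwa [hM _ fun w hw => by simp only [mem_union, mem_inter] at hw; tauto]),
    hM _ (fun w hw => by simp only [mem_union] at hw; tauto), hMD]

/-- Rule 3, full version. With pairwise disjoint node sets `A, B, C, D`,
write `C₂ = C \ anc(D)` (here `ancD` is a finset characterized as the set of ancestors of
`D`). If `B` is d-separated from `C` given `D` in the graph obtained from `G^{σ(x̃_A)}`
(edges out of `A` removed) by deleting all edges into `C₂`, then
`P(x_B | σ(x̃_A), σ(x̃_C), x_D) = P(x_B | σ(x̃_A), x_D)`, the composed intervention on the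
disjoint sets being `σ(x̃_{A ∪ C})`. The global Markov property for info-intervention
distributions is assumed, as allowed. -/
theorem info_rule3_full {V Ω : Type*} [Fintype V] [DecidableEq V]
    [Fintype Ω] [DecidableEq Ω]
    (pa : V → Finset V) (q : V → Ω → (V → Ω) → ℝ) (P : (V → Ω) → ℝ)
    (hloc : ∀ v a (x y : V → Ω), (∀ j ∈ pa v, x j = y j) → q v a x = q v a y)
    (hq0 : ∀ v a x, 0 ≤ q v a x) (hnorm : ∀ v x, ∑ a : Ω, q v a x = 1)
    (hfact : ∀ x, P x = ∏ v : V, q v (x v) x)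
    (hacyc : ∀ v, ¬ Relation.TransGen (fun u w : V => u ∈ pa w) v v)
    (A B C D : Finset V)
    (hAB : Disjoint A B) (hAC : Disjoint A C) (hAD : Disjoint A D)
    (hBC : Disjoint B C) (hBD : Disjoint B D) (hCD : Disjoint C D)
    (ancD : Finset V)
    (hanc : ∀ v, v ∈ ancD ↔ ∃ d ∈ D, Relation.TransGen (fun u w : V => u ∈ pa w) v d)
    (xt : V → Ω)
    (hMarkov : ∀ (A' : Finset V) (S T W : Finset V),
      dSep (fun u v => u ∈ pa v ∧ u ∉ A') (S : Set V) (T : Set V) (W : Set V) →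
        CondIndep (infoDist q A' xt) S T W)
    (hd : dSep (fun u v => (u ∈ pa v ∧ u ∉ A) ∧ v ∉ C \ ancD)
            (B : Set V) (C : Set V) (D : Set V))
    (y : V → Ω)
    (hpos1 : Marg (infoDist q (A ∪ C) xt) D y ≠ 0)
    (hpos2 : Marg (infoDist q A xt) D y ≠ 0)
    (hpos3 : Marg (infoDist q A xt)
        ((C ∩ ancD) ∪ D) (fun j => if j ∈ C ∩ ancD then xt j else y j) ≠ 0) :
    Marg (infoDist q (A ∪ C) xt) (B ∪ D) y / Marg (infoDist q (A ∪ C) xt) D y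
      = Marg (infoDist q A xt) (B ∪ D) y / Marg (infoDist q A xt) D y :=
  info_rule3_full_general pa q hloc hnorm hacyc A B C D hBC hCD ancD hanc xt hMarkov hd y hpos1
    hpos2 hpos3
end

section
/- (Graphical step in Rule 3's proof) Let G be a DAG, and let C₂ be a node set none of whose elements is an ancestor of D. If B is d-separated from C given D in the graph G_{C̄₂} obtained by deleting all edges into C₂, where C ⊇ C₂, then there is no directed path from C₂ to B in G. -/
open Relation

theorem dSep.disjoint {V : Type*} {E : V → V → Prop} {B C Z : Set V} (h : dSep E B C Z) :
    Disjoint B C :=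
  Set.disjoint_left.mpr fun v hB hC => by
    obtain ⟨i, hi0, hi, -⟩ := h 0 (fun _ => v) hB hC (fun i hi => absurd hi i.not_lt_zero)
    omega

theorem Relation.TransGen.exists_seq {V : Type*} {r : V → V → Prop} {a b : V}
    (h : TransGen r a b) :
    ∃ (n : ℕ) (f : ℕ → V), f 0 = a ∧ f n = b ∧ ∀ i < n, r (f i) (f (i + 1)) := by
  induction h with
  | @single b hab => exact ⟨1, fun i => if i = 0 then a else b, rfl, rfl, by simpa⟩
  | @tail b c _ hbc ih =>
    obtain ⟨n, f, hf0, hfn, hstep⟩ := ih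
    refine ⟨n + 1, fun i => if i ≤ n then f i else c, by simpa, by simp, ?_⟩
    intro i hi
    rcases Nat.lt_or_ge i n with hin | hin
    · simpa [hin.le, Nat.succ_le_of_lt hin] using hstep i hin
    · obtain rfl : i = n := by omega
      simpa [hfn] using hbc

theorem Relation.transGen_of_seq {V : Type*} {r : V → V → Prop} {f : ℕ → V} {n : ℕ}
    (hstep : ∀ i < n, r (f i) (f (i + 1))) {i j : ℕ} (hij : i < j) (hj : j ≤ n) :
    TransGen r (f i) (f j) := by
  induction j, hij using Nat.le_induction with
  | base => exact .single (hstep i (by omega))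
  | succ j _ ih => exact (ih (by omega)).tail (hstep j (by omega))

theorem Relation.TransGen.exists_transGen_avoiding {V : Type*} {r : V → V → Prop} {S : Set V}
    {a b : V} (h : TransGen r a b) (ha : a ∈ S) (hb : b ∉ S) :
    ∃ s ∈ S, TransGen (fun u v => r u v ∧ v ∉ S) s b := by
  induction h with
  | single hab => exact ⟨a, ha, .single ⟨hab, hb⟩⟩
  | @tail c b _ hcb ih =>
    by_cases hc : c ∈ S
    · exact ⟨c, hc, .single ⟨hcb, hb⟩⟩
    · obtain ⟨s, hs, hsc⟩ := ih hc
      exact ⟨s, hs, hsc.tail ⟨hcb, hb⟩⟩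

theorem BlockedAt.mem_of_backward {V : Type*} {r : V → V → Prop}
    (hasymm : ∀ u v, r u v → ¬ r v u) {Z : Set V} {g : ℕ → V} {n i : ℕ}
    (hstep : ∀ j < n, r (g (j + 1)) (g j)) (hi0 : 0 < i) (hin : i < n)
    (h : BlockedAt r Z g i) : g i ∈ Z := by
  rcases h with ⟨-, hZ⟩ | ⟨⟨hin_edge, -⟩, -⟩
  · exact hZ
  · have hout : r (g (i - 1 + 1)) (g (i - 1)) := hstep (i - 1) (by omega)
    rw [Nat.sub_add_cancel hi0] at hout
    exact absurd hin_edge (hasymm _ _ hout)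

theorem rule3_graphical_step_general {V : Type*} (E : V → V → Prop)
    (hacyc : ∀ v, ¬ Relation.TransGen E v v)
    (B C D C₂ : Set V)
    (hC₂ : C₂ ⊆ C) (hC₂anc : Disjoint C₂ (ancSet E D))
    (hd : dSep (fun u v => E u v ∧ v ∉ C₂) B C D) :
    ∀ c ∈ C₂, ∀ b ∈ B, ¬ Relation.TransGen E c b := by
  intro c hc b hb hcb
  have hbC₂ : b ∉ C₂ := fun h => Set.disjoint_left.mp hd.disjoint hb (hC₂ h)
  obtain ⟨s, hs, hsb⟩ := hcb.exists_transGen_avoiding hc hbC₂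
  obtain ⟨n, g, hg0, hgn, hstep⟩ := (transGen_swap.mpr hsb).exists_seq
  obtain ⟨i, hi0, hin, hblk⟩ :=
    hd n g (hg0 ▸ hb) (hgn ▸ hC₂ hs) fun j hj => .inr (hstep j hj)
  have hasymm : ∀ u v, (E u v ∧ v ∉ C₂) → ¬ (E v u ∧ u ∉ C₂) :=
    fun u v huv hvu => hacyc u (.tail (.single huv.1) hvu.1)
  have hiD : g i ∈ D := hblk.mem_of_backward hasymm hstep hi0 hin
  have hsi : TransGen E s (g i) := hgn ▸
    TransGen.mono (fun _ _ h => h.1) _ _ (transGen_swap.mp (transGen_of_seq hstep hin le_rfl))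
  exact Set.disjoint_left.mp hC₂anc hs ⟨g i, hiD, hsi⟩

/-- Graphical step in Rule 3's proof. Let `G` be a DAG and `C₂ ⊆ C` a node
set none of whose elements is an ancestor of `D`. If `B` is d-separated from `C` given `D`
in the graph `G_{C̄₂}` obtained by deleting all edges into `C₂`, then there is no directed
path from `C₂` to `B` in `G`. -/
theorem rule3_graphical_step {V : Type*} (E : V → V → Prop)
    (hacyc : ∀ v, ¬ Relation.TransGen E v v)
    (B C D C₂ : Set V)
    (hBC : Disjoint B C) (hBD : Disjoint B D) (hCD : Disjoint C D)
    (hC₂ : C₂ ⊆ C) (hC₂anc : Disjoint C₂ (ancSet E D))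
    (hd : dSep (fun u v => E u v ∧ v ∉ C₂) B C D) :
    ∀ c ∈ C₂, ∀ b ∈ B, ¬ Relation.TransGen E c b :=
  rule3_graphical_step_general E hacyc B C D C₂ hC₂ hC₂anc hd
end
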